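/- For a factor graph that is a tree (acyclic), the max-plus message-passing algorithm converges in a finite number of iterations, and after convergence the action u*_i = argmax_{u_i} Σ_{Q_k ∈ N(v_i)} μ_{Q_k→v_i}(u_i) is a global maximizer of Q(u) = Σ_j Q_j(u^j), assuming the global maximizer is unique. -/

import Mathlib

set_option linter.unusedSectionVars false
set_option linter.unusedVariables false
set_option maxHeartbeats 1000000

namespace MPaux
open SimpleGraph

variable {A : Type} {G : SimpleGraph A}

lemma concat_isPath {x y z : A} {p : G.Walk x y} (hp : p.IsPath) (h : G.Adj y z)
    (hz : z ∉ p.support) : (p.concat h).IsPath := by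
  rw [Walk.isPath_def, Walk.support_concat]
  simpa [List.concat_eq_append] using List.Nodup.concat hz hp.support_nodup

lemma dist_mem_le {x y z : A} (q : G.Walk x y) (hql : q.length = G.dist x y)
    (hmem : z ∈ q.support) : G.dist x z + G.dist z y ≤ G.dist x y := by
  classical
  have h1 : G.dist x z ≤ (q.takeUntil z hmem).length := dist_le _
  have h2 : G.dist z y ≤ (q.dropUntil z hmem).length := dist_le _
  have h3 : (q.takeUntil z hmem).length + (q.dropUntil z hmem).length = q.length := by
    rw [← Walk.length_append, Walk.take_spec]
  omega

/-- In a tree, for adjacent `a b`, every vertex is strictly closer to one of them. -/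
lemma dist_ne (hc : G.Connected) (ha : G.IsAcyclic) {a b : A} (hab : G.Adj a b)
    (x : A) : G.dist x a ≠ G.dist x b := by
  intro h
  obtain ⟨p, hp, hpl⟩ := hc.exists_path_of_dist x a
  obtain ⟨q, hq, hql⟩ := hc.exists_path_of_dist x b
  have hdab : G.dist a b = 1 := by rw [dist_eq_one_iff_adj]; exact hab
  have hanq : a ∉ q.support := by
    intro hmem
    have := dist_mem_le q hql hmem
    rw [hdab] at this
    omega
  have hq' : (q.concat hab.symm).IsPath := concat_isPath hq hab.symm hanq
  have hEq := ha.path_unique ⟨p, hp⟩ ⟨q.concat hab.symm, hq'⟩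
  rw [Subtype.mk_eq_mk] at hEq
  have hlen : p.length = (q.concat hab.symm).length := by rw [hEq]
  rw [Walk.length_concat] at hlen
  omega

lemma dist_adj_le (hc : G.Connected) {a b : A} (hab : G.Adj a b) (x : A) :
    G.dist x b ≤ G.dist x a + 1 := by
  have := hc.dist_triangle (u := x) (v := a) (w := b)
  have h2 : G.dist a b = 1 := by rw [dist_eq_one_iff_adj]; exact hab
  omega

/-- closure fact: if `x` is on the `a`-side of edge `ab` and `y` is adjacent to `x`,
then `y` is on the `a`-side or `y = b`. -/
lemma side_closed (hc : G.Connected) (ha : G.IsAcyclic) {a b x y : A} (hab : G.Adj a b)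
    (hyx : G.Adj y x) (hx : G.dist x a < G.dist x b) :
    G.dist y a < G.dist y b ∨ y = b := by
  by_cases hyb : y = b
  · right; exact hyb
  left
  by_contra hcon
  have hyy := dist_ne hc ha hab y
  have hxb : G.dist x b = G.dist x a + 1 := by
    have := dist_adj_le hc hab x; omega
  have hya : G.dist y a = G.dist y b + 1 := by
    have := dist_adj_le hc hab.symm y
    rw [dist_comm (u := y) (v := b), dist_comm (u := b)] at this
    omega
  have t1 : G.dist x b ≤ G.dist y b + 1 := by
    have := hc.dist_triangle (u := x) (v := y) (w := b)
    have h2 : G.dist x y = 1 := by rw [dist_eq_one_iff_adj]; exact hyx.symm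
    omega
  have t2 : G.dist y a ≤ G.dist x a + 1 := by
    have := hc.dist_triangle (u := y) (v := x) (w := a)
    have h2 : G.dist y x = 1 := by rw [dist_eq_one_iff_adj]; exact hyx
    omega
  have hyb2 : G.dist y b = G.dist x a := by omega
  obtain ⟨p, hp, hpl⟩ := hc.exists_path_of_dist x a
  obtain ⟨q, hq, hql⟩ := hc.exists_path_of_dist y b
  have hbnp : b ∉ p.support := by
    intro hmem
    have := dist_mem_le p hpl hmem
    have hd : G.dist b a = 1 := by rw [dist_eq_one_iff_adj]; exact hab.symm
    omega
  have hxnq : x ∉ q.support := by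
    intro hmem
    have h1 := dist_mem_le q hql hmem
    omega
  have hP1 : (p.concat hab).IsPath := concat_isPath hp hab hbnp
  have hP2 : (Walk.cons hyx.symm q).IsPath := hq.cons hxnq
  have hEq := ha.path_unique ⟨p.concat hab, hP1⟩ ⟨Walk.cons hyx.symm q, hP2⟩
  rw [Subtype.mk_eq_mk] at hEq
  cases p with
  | nil =>
      simp only [Walk.length_nil] at hpl
      have hq0 : q.length = 0 := by omega
      exact hyb (q.eq_of_length_eq_zero hq0)
  | cons h1 p' =>
      rename_i z
      rw [Walk.concat_cons] at hEq
      have hgv := congrArg (fun w => w.getVert 1) hEq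
      simp only [Walk.getVert_cons_succ, Walk.getVert_zero] at hgv
      -- hgv : z = y
      have hza : G.dist z a ≤ p'.length := dist_le p'
      have hp'l : p'.length + 1 = G.dist x a := by
        rw [Walk.length_cons] at hpl; omega
      have hza2 : G.dist x a ≤ G.dist z a + 1 := by
        have := hc.dist_triangle (u := x) (v := z) (w := a)
        have h2 : G.dist x z = 1 := by rw [dist_eq_one_iff_adj]; exact h1
        omega
      have hyaz : G.dist z a = G.dist y a := by rw [hgv]
      omega

end MPaux

namespace MPaux2
open SimpleGraph MPaux

variable {A : Type} {G : SimpleGraph A}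

lemma exists_penult (hc : G.Connected) {x y : A} (hxy : x ≠ y) :
    ∃ z, G.Adj z y ∧ G.dist x z + 1 = G.dist x y := by
  obtain ⟨p, hp, hpl⟩ := hc.exists_path_of_dist x y
  obtain ⟨q, hql⟩ : ∃ q : G.Walk y x, q.length = G.dist x y :=
    ⟨p.reverse, by rw [Walk.length_reverse, hpl]⟩
  cases q with
  | nil => exact absurd rfl hxy
  | cons h q' =>
      rename_i z
      refine ⟨z, h.symm, ?_⟩
      have h1 : G.dist z x ≤ q'.length := dist_le q'
      have h2 : G.dist x z = G.dist z x := dist_comm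
      have h3 : G.dist x y ≤ G.dist x z + 1 := dist_adj_le hc h.symm x
      have h4 : q'.length + 1 = G.dist x y := by rw [← hql]; rfl
      omega

lemma side_trans (hc : G.Connected) (ha : G.IsAcyclic) {a b c : A} (hab : G.Adj a b)
    (hca : G.Adj c a) (hcb : c ≠ b) :
    ∀ x, G.dist x c < G.dist x a → G.dist x a < G.dist x b := by
  suffices H : ∀ n x, G.dist x c = n → G.dist x c < G.dist x a → G.dist x a < G.dist x b by
    exact fun x hx => H _ x rfl hx
  intro n
  induction n using Nat.strong_induction_on with
  | _ n IH =>
    intro x hxn hlt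
    rcases Nat.eq_zero_or_pos n with h0 | h0
    · have hxc : x = c := (hc.dist_eq_zero_iff).mp (by omega)
      subst hxc
      have h1 : G.dist x a = 1 := dist_eq_one_iff_adj.mpr hca
      have hne := dist_ne hc ha hab x
      have hle := dist_adj_le hc hab x
      have hb0 : G.dist x b ≠ 0 := fun h => hcb (Eq.symm ((hc.dist_eq_zero_iff).mp h)).symm
      omega
    · have hxc : x ≠ c := by
        intro h; subst h; rw [(hc.dist_eq_zero_iff).mpr rfl] at hxn; omega
      obtain ⟨z, hzx, hzd⟩ := exists_penult hc (Ne.symm hxc)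
      -- z adjacent to x with dist c z + 1 = dist c x
      have hzc : G.dist z c + 1 = n := by
        rw [← hxn, dist_comm (u := x) (v := c), ← hzd, dist_comm (u := z) (v := c)]
      have hxza : G.dist x a ≤ 1 + G.dist z a := by
        have := hc.dist_triangle (u := x) (v := z) (w := a)
        have h2 : G.dist x z = 1 := dist_eq_one_iff_adj.mpr hzx.symm
        omega
      have hzlt : G.dist z c < G.dist z a := by omega
      have hIH := IH (n - 1) (by omega) z (by omega) (by omega)
      rcases side_closed hc ha hab hzx.symm hIH with h | h
      · exact h
      · exfalso
        subst h
        have h1 : G.dist x a = 1 := dist_eq_one_iff_adj.mpr hab.symm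
        have h2 : G.dist x c = 0 := by omega
        exact hcb ((hc.dist_eq_zero_iff).mp h2).symm

end MPaux2

section Sup
variable {ι : Type} [Fintype ι] [Nonempty ι]

lemma exists_ciSup_eq (f : ι → ℝ) : ∃ i, (⨆ j, f j) = f i ∧ ∀ j, f j ≤ f i := by
  obtain ⟨i, hi⟩ := Finite.exists_max f
  exact ⟨i, le_antisymm (ciSup_le hi) (le_ciSup (Set.Finite.bddAbove (Set.finite_range f)) i), hi⟩

lemma le_ciSup' (f : ι → ℝ) (i : ι) : f i ≤ ⨆ j, f j :=
  le_ciSup (Set.Finite.bddAbove (Set.finite_range f)) i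

end Sup


namespace MPaux
open SimpleGraph

section Sides
variable {V F : Type} [Fintype V] [Fintype F]

/-- All vertices strictly closer to `a` than to `b`. -/
noncomputable def sideAll (G : SimpleGraph (V ⊕ F)) (a b : V ⊕ F) : Finset (V ⊕ F) :=
  Finset.univ.filter (fun x => G.dist x a < G.dist x b)

/-- Factors strictly closer to `f` than to `v`. -/
noncomputable def fSide (G : SimpleGraph (V ⊕ F)) (f : F) (v : V) : Finset F :=
  Finset.univ.filter (fun g => G.dist (Sum.inr g) (Sum.inr f) < G.dist (Sum.inr g) (Sum.inl v))

/-- Factors strictly closer to `v` than to `f`. -/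
noncomputable def vSideF (G : SimpleGraph (V ⊕ F)) (v : V) (f : F) : Finset F :=
  Finset.univ.filter (fun g => G.dist (Sum.inr g) (Sum.inl v) < G.dist (Sum.inr g) (Sum.inr f))

variable {G : SimpleGraph (V ⊕ F)} {N : F → Finset V}

lemma mem_fSide {f : F} {v : V} {g : F} :
    g ∈ fSide G f v ↔ G.dist (Sum.inr g) (Sum.inr f) < G.dist (Sum.inr g) (Sum.inl v) := by
  simp [fSide]

lemma mem_vSideF {f : F} {v : V} {g : F} :
    g ∈ vSideF G v f ↔ G.dist (Sum.inr g) (Sum.inl v) < G.dist (Sum.inr g) (Sum.inr f) := by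
  simp [vSideF]

lemma mem_sideAll {a b x : V ⊕ F} :
    x ∈ sideAll G a b ↔ G.dist x a < G.dist x b := by simp [sideAll]

section withHG
variable (hG : ∀ a b : V ⊕ F, G.Adj a b ↔
      ((∃ v f, a = Sum.inl v ∧ b = Sum.inr f ∧ v ∈ N f) ∨
       (∃ v f, b = Sum.inl v ∧ a = Sum.inr f ∧ v ∈ N f)))

include hG

lemma adj_inl_inr {v : V} {f : F} : G.Adj (Sum.inl v) (Sum.inr f) ↔ v ∈ N f := by
  rw [hG]
  constructor
  · rintro (⟨v', f', h1, h2, h3⟩ | ⟨v', f', h1, h2, h3⟩)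
    · cases h1; cases h2; exact h3
    · cases h1
  · intro h; exact Or.inl ⟨v, f, rfl, rfl, h⟩

lemma nbr_of_inl {z : V ⊕ F} {v : V} (h : G.Adj z (Sum.inl v)) :
    ∃ f, z = Sum.inr f ∧ v ∈ N f := by
  rw [hG] at h
  rcases h with ⟨v', f', h1, h2, h3⟩ | ⟨v', f', h1, h2, h3⟩
  · cases h2
  · cases h1; exact ⟨f', h2, h3⟩

lemma nbr_of_inr {z : V ⊕ F} {f : F} (h : G.Adj z (Sum.inr f)) :
    ∃ v, z = Sum.inl v ∧ v ∈ N f := by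
  rw [hG] at h
  rcases h with ⟨v', f', h1, h2, h3⟩ | ⟨v', f', h1, h2, h3⟩
  · cases h2; exact ⟨v', h1, h3⟩
  · cases h1

variable (hc : G.Connected) (ha : G.IsAcyclic)
include hc ha

/-- the two factor-sides around edge v–f partition F (for membership purposes). -/
lemma side_or (hvf : v ∈ N f) (g : F) : g ∈ fSide G f v ∨ g ∈ vSideF G v f := by
  have hadj : G.Adj (Sum.inl v) (Sum.inr f) := (adj_inl_inr hG).mpr hvf
  have := dist_ne hc ha hadj (Sum.inr g)
  rw [mem_fSide, mem_vSideF]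
  omega

/-- disjointness of the two sides around a variable, for arbitrary points. -/
lemma point_disj_around_v {v : V} {k k' : F} (hk : v ∈ N k) (hk' : v ∈ N k') (hne : k ≠ k')
    {x : V ⊕ F} (h1 : G.dist x (Sum.inr k) < G.dist x (Sum.inl v))
    (h2 : G.dist x (Sum.inr k') < G.dist x (Sum.inl v)) : False := by
  have hadj : G.Adj (Sum.inl v) (Sum.inr k') := (adj_inl_inr hG).mpr hk'
  have hadjk : G.Adj (Sum.inr k) (Sum.inl v) := ((adj_inl_inr hG).mpr hk).symm
  have := MPaux2.side_trans hc ha hadj hadjk (by simp [hne]) x h1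
  omega

/-- disjointness of the two sides around a factor, for arbitrary points. -/
lemma point_disj_around_f {f : F} {v v' : V} (hv : v ∈ N f) (hv' : v' ∈ N f) (hne : v ≠ v')
    {x : V ⊕ F} (h1 : G.dist x (Sum.inl v) < G.dist x (Sum.inr f))
    (h2 : G.dist x (Sum.inl v') < G.dist x (Sum.inr f)) : False := by
  have hadj : G.Adj (Sum.inr f) (Sum.inl v') := ((adj_inl_inr hG).mpr hv').symm
  have hadjv : G.Adj (Sum.inl v) (Sum.inr f) := (adj_inl_inr hG).mpr hv
  have := MPaux2.side_trans hc ha hadj hadjv (by simp [hne]) x h1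
  omega

/-- disjointness of the factor-sides around a variable. -/
lemma fSide_disj {v : V} {k k' : F} (hk : v ∈ N k) (hk' : v ∈ N k') (hne : k ≠ k')
    {g : F} (h1 : g ∈ fSide G k v) (h2 : g ∈ fSide G k' v) : False := by
  have hadj : G.Adj (Sum.inl v) (Sum.inr k') := (adj_inl_inr hG).mpr hk'
  have hadjk : G.Adj (Sum.inr k) (Sum.inl v) := ((adj_inl_inr hG).mpr hk).symm
  rw [mem_fSide] at h1 h2
  have := MPaux2.side_trans hc ha hadj hadjk (by simp [hne]) (Sum.inr g) h1
  omega

/-- disjointness of the variable-sides around a factor. -/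
lemma vSideF_disj {f : F} {v v' : V} (hv : v ∈ N f) (hv' : v' ∈ N f) (hne : v ≠ v')
    {g : F} (h1 : g ∈ vSideF G v f) (h2 : g ∈ vSideF G v' f) : False := by
  have hadj : G.Adj (Sum.inr f) (Sum.inl v') := ((adj_inl_inr hG).mpr hv').symm
  have hadjv : G.Adj (Sum.inl v) (Sum.inr f) := (adj_inl_inr hG).mpr hv
  rw [mem_vSideF] at h1 h2
  have := MPaux2.side_trans hc ha hadj hadjv (by simp [hne]) (Sum.inr g) h1
  omega

/-- coverage: every factor is on the side of some neighbour of `v`. -/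
lemma cover_v (v : V) (g : F) : ∃ k, v ∈ N k ∧ g ∈ fSide G k v := by
  have hne : (Sum.inr g : V ⊕ F) ≠ Sum.inl v := by simp
  obtain ⟨z, hz, hd⟩ := MPaux2.exists_penult hc hne
  obtain ⟨k, rfl, hk⟩ := nbr_of_inl hG hz
  exact ⟨k, hk, by rw [mem_fSide]; omega⟩

/-- refined coverage for `vSideF`. -/
lemma vSideF_eq_union (hvf : v ∈ N f) (g : F) :
    g ∈ vSideF G v f ↔ ∃ k, v ∈ N k ∧ k ≠ f ∧ g ∈ fSide G k v := by
  constructor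
  · intro hg
    obtain ⟨k, hk, hgk⟩ := cover_v hG hc ha v g
    refine ⟨k, hk, ?_, hgk⟩
    intro h; subst h
    rw [mem_vSideF] at hg; rw [mem_fSide] at hgk; omega
  · rintro ⟨k, hk, hkf, hgk⟩
    have hadj : G.Adj (Sum.inl v) (Sum.inr f) := (adj_inl_inr hG).mpr hvf
    have hadjk : G.Adj (Sum.inr k) (Sum.inl v) := ((adj_inl_inr hG).mpr hk).symm
    rw [mem_fSide] at hgk
    rw [mem_vSideF]
    exact MPaux2.side_trans hc ha hadj hadjk (by simp [hkf]) (Sum.inr g) hgk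

lemma self_mem_fSide (hvf : v ∈ N f) : f ∈ fSide G f v := by
  have hadj : G.Adj (Sum.inl v) (Sum.inr f) := (adj_inl_inr hG).mpr hvf
  rw [mem_fSide]
  have h0 : G.dist (Sum.inr f) (Sum.inr f) = 0 := (hc.dist_eq_zero_iff).mpr rfl
  have h1 : G.dist (Sum.inr f) (Sum.inl v) ≠ 0 := by
    intro h; exact absurd ((hc.dist_eq_zero_iff).mp h) (by simp)
  omega

lemma not_self_mem_vSideF (hv'f : v' ∈ N f) : f ∉ vSideF G v' f := by
  rw [mem_vSideF]
  have h0 : G.dist (Sum.inr f) (Sum.inr f) = 0 := (hc.dist_eq_zero_iff).mpr rfl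
  omega

/-- refined coverage for `fSide`. -/
lemma fSide_eq_union (hvf : v ∈ N f) (g : F) :
    g ∈ fSide G f v ↔ g = f ∨ ∃ v', v' ∈ N f ∧ v' ≠ v ∧ g ∈ vSideF G v' f := by
  constructor
  · intro hg
    by_cases hgf : g = f
    · exact Or.inl hgf
    right
    have hne : (Sum.inr g : V ⊕ F) ≠ Sum.inr f := by simp [hgf]
    obtain ⟨z, hz, hd⟩ := MPaux2.exists_penult hc hne
    obtain ⟨v', rfl, hv'⟩ := nbr_of_inr hG hz
    refine ⟨v', hv', ?_, ?_⟩
    · intro h; subst h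
      rw [mem_fSide] at hg; omega
    · rw [mem_vSideF]; omega
  · rintro (rfl | ⟨v', hv', hv'v, hg⟩)
    · exact self_mem_fSide hG hc ha hvf
    · have hadj : G.Adj (Sum.inr f) (Sum.inl v) := ((adj_inl_inr hG).mpr hvf).symm
      have hadjv' : G.Adj (Sum.inl v') (Sum.inr f) := (adj_inl_inr hG).mpr hv'
      rw [mem_vSideF] at hg
      rw [mem_fSide]
      exact MPaux2.side_trans hc ha hadj hadjv' (by simp [hv'v]) (Sum.inr g) hg

/-- support containment for `fSide`: variables of a factor on the `k`-side are
on the `k`-side or equal to `v`. -/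
lemma support_fSide {v : V} {k : F} (hk : v ∈ N k) {g : F} (hg : g ∈ fSide G k v)
    {z : V} (hz : z ∈ N g) :
    z = v ∨ G.dist (Sum.inl z) (Sum.inr k) < G.dist (Sum.inl z) (Sum.inl v) := by
  have hadj : G.Adj (Sum.inr k) (Sum.inl v) := ((adj_inl_inr hG).mpr hk).symm
  have hzg : G.Adj (Sum.inl z) (Sum.inr g) := (adj_inl_inr hG).mpr hz
  rw [mem_fSide] at hg
  rcases side_closed hc ha hadj hzg hg with h | h
  · exact Or.inr h
  · left; injection h

/-- support containment for `vSideF`. -/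
lemma support_vSideF {v' : V} {f : F} (hv' : v' ∈ N f) {g : F} (hg : g ∈ vSideF G v' f)
    {z : V} (hz : z ∈ N g) :
    G.dist (Sum.inl z) (Sum.inl v') < G.dist (Sum.inl z) (Sum.inr f) := by
  have hadj : G.Adj (Sum.inl v') (Sum.inr f) := (adj_inl_inr hG).mpr hv'
  have hzg : G.Adj (Sum.inl z) (Sum.inr g) := (adj_inl_inr hG).mpr hz
  rw [mem_vSideF] at hg
  rcases side_closed hc ha hadj hzg hg with h | h
  · exact h
  · exact absurd h (by simp)

/-- a second neighbour `v` of `f` is not on the `v'`-side of edge `v'–f`. -/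
lemma nbr_not_vSide {f : F} {v v' : V} (hv : v ∈ N f) (hv' : v' ∈ N f) (hne : v ≠ v') :
    ¬ G.dist (Sum.inl v) (Sum.inl v') < G.dist (Sum.inl v) (Sum.inr f) := by
  have h1 : G.dist (Sum.inl v) (Sum.inr f) = 1 :=
    dist_eq_one_iff_adj.mpr ((adj_inl_inr hG).mpr hv)
  have h2 : G.dist (Sum.inl v) (Sum.inl v') ≠ 0 := by
    intro h; exact hne (by injection (hc.dist_eq_zero_iff).mp h)
  omega

end withHG
end Sides
end MPaux


namespace MPaux
open SimpleGraph

section SideAll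
variable {V F : Type} [Fintype V] [Fintype F] {G : SimpleGraph (V ⊕ F)}

lemma mem_sideAll_self (hc : G.Connected) {a b : V ⊕ F} (hab : G.Adj a b) :
    a ∈ sideAll G a b := by
  rw [mem_sideAll]
  have h0 : G.dist a a = 0 := (hc.dist_eq_zero_iff).mpr rfl
  have h1 : G.dist a b ≠ 0 := by
    intro h; exact hab.ne ((hc.dist_eq_zero_iff).mp h)
  omega

lemma sideAll_card_lt (hc : G.Connected) (ha : G.IsAcyclic) {a b c : V ⊕ F}
    (hab : G.Adj a b) (hca : G.Adj c a) (hcb : c ≠ b) :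
    (sideAll G c a).card < (sideAll G a b).card := by
  apply Finset.card_lt_card
  rw [Finset.ssubset_def]
  constructor
  · intro x hx
    rw [mem_sideAll] at hx ⊢
    exact MPaux2.side_trans hc ha hab hca hcb x hx
  · intro hsub
    have h1 := hsub (mem_sideAll_self hc hab)
    rw [mem_sideAll] at h1
    have h0 : G.dist a a = 0 := (hc.dist_eq_zero_iff).mpr rfl
    omega

lemma sideAll_card_pos (hc : G.Connected) {a b : V ⊕ F} (hab : G.Adj a b) :
    1 ≤ (sideAll G a b).card :=
  Finset.card_pos.mpr ⟨a, mem_sideAll_self hc hab⟩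

lemma sideAll_card_le (a b : V ⊕ F) : (sideAll G a b).card ≤ Fintype.card (V ⊕ F) := by
  rw [sideAll]
  exact (Finset.card_filter_le _ _).trans (le_of_eq (Finset.card_univ))

end SideAll

section Glue
variable {V : Type} {U : V → Type} [∀ v, Nonempty (U v)] {ι : Type}

noncomputable def glueFun (K : Finset ι) (P : ι → V → Prop) (e : ι → (v : V) → U v)
    (w : (v : V) → U v) : (v : V) → U v := fun z =>
  letI := Classical.propDecidable (∃ k, k ∈ K ∧ P k z)
  if h : ∃ k, k ∈ K ∧ P k z then e (Classical.choose h) z else w z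

lemma glueFun_eq {K : Finset ι} {P : ι → V → Prop} {e : ι → (v : V) → U v}
    {w : (v : V) → U v}
    (hdisj : ∀ k ∈ K, ∀ k' ∈ K, ∀ z, P k z → P k' z → k = k')
    {k : ι} (hk : k ∈ K) {z : V} (hz : P k z) : glueFun K P e w z = e k z := by
  have h : ∃ k, k ∈ K ∧ P k z := ⟨k, hk, hz⟩
  have hs := Classical.choose_spec h
  show (letI := Classical.propDecidable (∃ k, k ∈ K ∧ P k z);
    if h : ∃ k, k ∈ K ∧ P k z then e (Classical.choose h) z else w z) = e k z
  rw [dif_pos h, hdisj _ hs.1 _ hk z hs.2 hz]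

lemma glueFun_eq_of_not {K : Finset ι} {P : ι → V → Prop} {e : ι → (v : V) → U v}
    {w : (v : V) → U v} {z : V} (h : ¬ ∃ k, k ∈ K ∧ P k z) :
    glueFun K P e w z = w z := by
  show (letI := Classical.propDecidable (∃ k, k ∈ K ∧ P k z);
    if h : ∃ k, k ∈ K ∧ P k z then e (Classical.choose h) z else w z) = w z
  rw [dif_neg h]

end Glue
end MPaux


open MPaux MPaux2 SimpleGraph


/-- Messages of the max-plus algorithm on a factor graph: a pair consisting of
variable-to-factor messages and factor-to-variable messages. -/
def MaxPlusMsg (V F : Type) (U : V → Type) : Type :=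
  ((v : V) → F → U v → ℝ) × (F → (v : V) → U v → ℝ)

/-- One synchronous update of all max-plus messages (normalization constants
taken to be zero):
`μ_{v→f}(x) = Σ_{k ∈ N(v)\{f}} μ_{k→v}(x)` and
`μ_{f→v}(x) = max_{u : u v = x} (Q_f(u) + Σ_{v' ∈ N(f)\{v}} μ_{v'→f}(u v'))`. -/
noncomputable def maxPlusStep (V F : Type) [Fintype V] [Fintype F]
    [DecidableEq V] [DecidableEq F]
    (U : V → Type) [∀ v, Fintype (U v)] [∀ v, Nonempty (U v)]
    (N : F → Finset V) (Q : F → ((v : V) → U v) → ℝ) :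
    MaxPlusMsg V F U → MaxPlusMsg V F U := fun μ =>
  ( fun v f x =>
      ∑ k ∈ Finset.univ.filter (fun k : F => v ∈ N k ∧ k ≠ f), μ.2 k v x,
    fun f v x =>
      ⨆ w : (v' : V) → U v',
        (Q f (Function.update w v x) +
          ∑ v' ∈ (N f).erase v, μ.1 v' f (Function.update w v x v')) )

/-- For an acyclic (tree) factor graph, the max-plus message-passing algorithm
started from zero messages converges after finitely many iterations, and
(assuming the global maximizer of `Q(u) = Σ_f Q_f(u)` is unique) any joint
action whose coordinates maximize the converged incoming message sums
`u*_v = argmax_{x} Σ_{f ∈ N(v)} μ_{f→v}(x)` is a global maximizer of `Q`. -/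
theorem stmt_6 (V F : Type) [Fintype V] [Fintype F]
    [DecidableEq V] [DecidableEq F]
    (U : V → Type) [∀ v, Fintype (U v)] [∀ v, Nonempty (U v)]
    (N : F → Finset V) (Q : F → ((v : V) → U v) → ℝ)
    (hdep : ∀ f u u', (∀ v ∈ N f, u v = u' v) → Q f u = Q f u')
    (G : SimpleGraph (V ⊕ F))
    (hG : ∀ a b : V ⊕ F, G.Adj a b ↔
      ((∃ v f, a = Sum.inl v ∧ b = Sum.inr f ∧ v ∈ N f) ∨
       (∃ v f, b = Sum.inl v ∧ a = Sum.inr f ∧ v ∈ N f)))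
    (htree : G.IsTree)
    (hunique : ∃! ustar : (v : V) → U v,
      ∀ u : (v : V) → U v, ∑ f, Q f u ≤ ∑ f, Q f ustar) :
    ∃ T : ℕ, ∃ μ : MaxPlusMsg V F U,
      (∀ t : ℕ, T ≤ t →
        (maxPlusStep V F U N Q)^[t] ((fun _ _ _ => 0), (fun _ _ _ => 0)) = μ) ∧
      (∀ usel : (v : V) → U v,
        (∀ v : V, ∀ x : U v,
          ∑ f ∈ Finset.univ.filter (fun f : F => v ∈ N f), μ.2 f v x ≤
          ∑ f ∈ Finset.univ.filter (fun f : F => v ∈ N f), μ.2 f v (usel v)) →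
        ∀ u : (v : V) → U v, ∑ f, Q f u ≤ ∑ f, Q f usel) := by
  have hc : G.Connected := htree.isConnected
  have ha : G.IsAcyclic := htree.2
  set z0 : MaxPlusMsg V F U := ((fun _ _ _ => 0), (fun _ _ _ => 0)) with hz0
  set it : ℕ → MaxPlusMsg V F U := fun t => (maxPlusStep V F U N Q)^[t] z0 with hit
  have hit1 : ∀ (t : ℕ) (v : V) (f : F) (x : U v), (it (t+1)).1 v f x =
      ∑ k ∈ Finset.univ.filter (fun k : F => v ∈ N k ∧ k ≠ f), (it t).2 k v x := by
    intro t v f x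
    show ((maxPlusStep V F U N Q)^[t+1] z0).1 v f x = _
    rw [Function.iterate_succ_apply']
    rfl
  have hit2 : ∀ (t : ℕ) (f : F) (v : V) (x : U v), (it (t+1)).2 f v x =
      ⨆ w : (v' : V) → U v',
        (Q f (Function.update w v x) +
          ∑ v' ∈ (N f).erase v, (it t).1 v' f (Function.update w v x v')) := by
    intro t f v x
    show ((maxPlusStep V F U N Q)^[t+1] z0).2 f v x = _
    rw [Function.iterate_succ_apply']
    rfl
  -- stabilization of edge messages
  have hstab : ∀ n : ℕ, ∀ t : ℕ, n ≤ t → ∀ (v : V) (f : F), v ∈ N f →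
      ((sideAll G (Sum.inl v) (Sum.inr f)).card ≤ n → (it t).1 v f = (it n).1 v f) ∧
      ((sideAll G (Sum.inr f) (Sum.inl v)).card ≤ n → (it t).2 f v = (it n).2 f v) := by
    intro n
    induction n using Nat.strong_induction_on with
    | _ n IH =>
      intro t ht v f hvf
      have hadjvf : G.Adj (Sum.inl v) (Sum.inr f) := (adj_inl_inr hG).mpr hvf
      constructor
      · intro hcard
        rcases Nat.eq_or_lt_of_le ht with rfl | hlt
        · rfl
        have hn1 : 1 ≤ n := sideAll_card_pos hc hadjvf |>.trans hcard
        obtain ⟨t', rfl⟩ : ∃ t', t = t' + 1 := ⟨t - 1, by omega⟩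
        obtain ⟨n', rfl⟩ : ∃ n', n = n' + 1 := ⟨n - 1, by omega⟩
        funext x
        rw [hit1 t' v f x, hit1 n' v f x]
        apply Finset.sum_congr rfl
        intro k hk
        rw [Finset.mem_filter] at hk
        have hck : (sideAll G (Sum.inr k) (Sum.inl v)).card ≤ n' := by
          have := sideAll_card_lt hc ha hadjvf
            ((adj_inl_inr hG).mpr hk.2.1).symm (by simp [hk.2.2])
          omega
        have := (IH n' (by omega) t' (by omega) v k hk.2.1).2 hck
        rw [this]
      · intro hcard
        rcases Nat.eq_or_lt_of_le ht with rfl | hlt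
        · rfl
        have hn1 : 1 ≤ n := sideAll_card_pos hc hadjvf.symm |>.trans hcard
        obtain ⟨t', rfl⟩ : ∃ t', t = t' + 1 := ⟨t - 1, by omega⟩
        obtain ⟨n', rfl⟩ : ∃ n', n = n' + 1 := ⟨n - 1, by omega⟩
        funext x
        rw [hit2 t' f v x, hit2 n' f v x]
        have hfun : ∀ (w : (v' : V) → U v'), (Q f (Function.update w v x) +
              ∑ v' ∈ (N f).erase v, (it t').1 v' f (Function.update w v x v')) =
            (Q f (Function.update w v x) +
              ∑ v' ∈ (N f).erase v, (it n').1 v' f (Function.update w v x v')) := by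
          intro w
          congr 1
          apply Finset.sum_congr rfl
          intro v' hv'
          rw [Finset.mem_erase] at hv'
          have hcv' : (sideAll G (Sum.inl v') (Sum.inr f)).card ≤ n' := by
            have := sideAll_card_lt hc ha hadjvf.symm
              ((adj_inl_inr hG).mpr hv'.2) (by simp [hv'.1])
            omega
          have := (IH n' (by omega) t' (by omega) v' f hv'.2).1 hcv'
          rw [this]
        exact iSup_congr hfun
  -- global stabilization
  set K : ℕ := Fintype.card (V ⊕ F) with hK
  have hstable : ∀ t : ℕ, K + 1 ≤ t → it t = it (K + 1) := by
    intro t ht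
    obtain ⟨t', rfl⟩ : ∃ t', t = t' + 1 := ⟨t - 1, by omega⟩
    have ht' : K ≤ t' := by omega
    have hedge2 : ∀ (v : V) (f : F), v ∈ N f → (it t').2 f v = (it K).2 f v := by
      intro v f hvf
      exact (hstab K t' ht' v f hvf).2 (sideAll_card_le _ _)
    have hedge1 : ∀ (v : V) (f : F), v ∈ N f → (it t').1 v f = (it K).1 v f := by
      intro v f hvf
      exact (hstab K t' ht' v f hvf).1 (sideAll_card_le _ _)
    have h1 : (it (t'+1)).1 = (it (K+1)).1 := by
      funext v f x
      rw [hit1 t' v f x, hit1 K v f x]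
      apply Finset.sum_congr rfl
      intro k hk
      rw [Finset.mem_filter] at hk
      rw [hedge2 v k hk.2.1]
    have h2 : (it (t'+1)).2 = (it (K+1)).2 := by
      funext f v x
      rw [hit2 t' f v x, hit2 K f v x]
      apply iSup_congr
      intro w
      congr 1
      apply Finset.sum_congr rfl
      intro v' hv'
      rw [Finset.mem_erase] at hv'
      rw [hedge1 v' f hv'.2]
    exact Prod.ext h1 h2
  refine ⟨K + 1, it (K + 1), fun t ht => hstable t ht, ?_⟩
  -- fixed point equations
  have hfix : maxPlusStep V F U N Q (it (K+1)) = it (K+1) := by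
    have h := hstable (K+2) (by omega)
    calc maxPlusStep V F U N Q (it (K+1)) = it (K+2) := by
          show maxPlusStep V F U N Q ((maxPlusStep V F U N Q)^[K+1] z0) =
            (maxPlusStep V F U N Q)^[K+2] z0
          exact (Function.iterate_succ_apply' _ _ _).symm
      _ = it (K+1) := h
  have hfp1 : ∀ (v : V) (f : F) (x : U v), (it (K+1)).1 v f x =
      ∑ k ∈ Finset.univ.filter (fun k : F => v ∈ N k ∧ k ≠ f), (it (K+1)).2 k v x := by
    intro v f x
    conv_lhs => rw [← hfix]
    rfl
  have hfp2 : ∀ (f : F) (v : V) (x : U v), (it (K+1)).2 f v x =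
      ⨆ w : (v' : V) → U v',
        (Q f (Function.update w v x) +
          ∑ v' ∈ (N f).erase v, (it (K+1)).1 v' f (Function.update w v x v')) := by
    intro f v x
    conv_lhs => rw [← hfix]
    rfl
  -- the mutual tree recursion for the fixed point
  have hAB : ∀ n : ℕ, ∀ (v : V) (f : F), v ∈ N f →
      (2 * (fSide G f v).card ≤ n → ∀ x : U v, (it (K+1)).2 f v x =
        ⨆ u : (v' : V) → U v', ∑ g ∈ fSide G f v, Q g (Function.update u v x)) ∧
      (2 * (vSideF G v f).card + 1 ≤ n → ∀ x : U v, (it (K+1)).1 v f x =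
        ⨆ u : (v' : V) → U v', ∑ g ∈ vSideF G v f, Q g (Function.update u v x)) := by
    intro n
    induction n using Nat.strong_induction_on with
    | _ n IH =>
      intro v f hvf
      constructor
      · -- factor-to-variable message
        intro hn x
        have hfin : f ∈ fSide G f v := self_mem_fSide hG hc ha hvf
        have hcardS : 1 ≤ (fSide G f v).card := Finset.card_pos.mpr ⟨f, hfin⟩
        have hB : ∀ v' ∈ (N f).erase v, ∀ y : U v', (it (K+1)).1 v' f y =
            ⨆ u : (v'' : V) → U v'', ∑ g ∈ vSideF G v' f, Q g (Function.update u v' y) := by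
          intro v' hv'
          rw [Finset.mem_erase] at hv'
          have hsub : vSideF G v' f ⊆ (fSide G f v).erase f := by
            intro g hg
            rw [Finset.mem_erase]
            exact ⟨fun h => (not_self_mem_vSideF hG hc ha hv'.2) (h ▸ hg),
              (fSide_eq_union hG hc ha hvf g).mpr (Or.inr ⟨v', hv'.2, hv'.1, hg⟩)⟩
          have hcard : (vSideF G v' f).card ≤ (fSide G f v).card - 1 := by
            have h1 := Finset.card_le_card hsub
            rw [Finset.card_erase_of_mem hfin] at h1
            exact h1
          exact (IH (n-1) (by omega) v' f hv'.2).2 (by omega)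
        rw [hfp2 f v x]
        have hdisjv' : Set.PairwiseDisjoint (↑((N f).erase v))
            (fun v' => vSideF G v' f) := by
          intro a hA b hb hab
          rw [Finset.mem_coe, Finset.mem_erase] at hA hb
          refine Finset.disjoint_left.mpr ?_
          intro g hga hgb
          exact vSideF_disj hG hc ha hA.2 hb.2 hab hga hgb
        have hsplit : fSide G f v =
            insert f (((N f).erase v).biUnion (fun v' => vSideF G v' f)) := by
          ext g
          rw [fSide_eq_union hG hc ha hvf g, Finset.mem_insert, Finset.mem_biUnion]
          constructor
          · rintro (rfl | ⟨v', h1, h2, h3⟩)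
            · exact Or.inl rfl
            · exact Or.inr ⟨v', Finset.mem_erase.mpr ⟨h2, h1⟩, h3⟩
          · rintro (rfl | ⟨v', hv', h3⟩)
            · exact Or.inl rfl
            · rw [Finset.mem_erase] at hv'
              exact Or.inr ⟨v', hv'.2, hv'.1, h3⟩
        have hfnot : f ∉ ((N f).erase v).biUnion (fun v' => vSideF G v' f) := by
          rw [Finset.mem_biUnion]
          rintro ⟨v', hv', hf⟩
          rw [Finset.mem_erase] at hv'
          exact not_self_mem_vSideF hG hc ha hv'.2 hf
        have hsum : ∀ u0 : (v' : V) → U v', ∑ g ∈ fSide G f v, Q g u0 =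
            Q f u0 + ∑ v' ∈ (N f).erase v, ∑ g ∈ vSideF G v' f, Q g u0 := by
          intro u0
          rw [hsplit, Finset.sum_insert hfnot, Finset.sum_biUnion hdisjv']
        apply le_antisymm
        · apply ciSup_le
          intro w
          have hch : ∀ v' : V, ∃ u0 : (v'' : V) → U v'',
              (⨆ u : (v'' : V) → U v'', ∑ g ∈ vSideF G v' f,
                Q g (Function.update u v' (w v'))) =
                ∑ g ∈ vSideF G v' f, Q g (Function.update u0 v' (w v')) :=
            fun v' => (exists_ciSup_eq _).imp (fun u0 h => h.1)
          choose e he1 using hch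
          have hPdisj : ∀ k ∈ (N f).erase v, ∀ k' ∈ (N f).erase v, ∀ z : V,
              (G.dist (Sum.inl z) (Sum.inl k) < G.dist (Sum.inl z) (Sum.inr f)) →
              (G.dist (Sum.inl z) (Sum.inl k') < G.dist (Sum.inl z) (Sum.inr f)) → k = k' := by
            intro k hk k' hk' z h1 h2
            rw [Finset.mem_erase] at hk hk'
            by_contra hne
            exact point_disj_around_f hG hc ha hk.2 hk'.2 hne h1 h2
          set ustar : (v'' : V) → U v'' :=
            glueFun ((N f).erase v)
              (fun v' z => G.dist (Sum.inl z) (Sum.inl v') < G.dist (Sum.inl z) (Sum.inr f))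
              (fun v' => Function.update (e v') v' (w v')) w with hustar
          have hQf : Q f (Function.update ustar v x) = Q f (Function.update w v x) := by
            apply hdep
            intro z hz
            by_cases hzv : z = v
            · subst hzv; rw [Function.update_self, Function.update_self]
            · rw [Function.update_of_ne hzv, Function.update_of_ne hzv]
              have hzE : z ∈ (N f).erase v := Finset.mem_erase.mpr ⟨hzv, hz⟩
              have hPzz : G.dist (Sum.inl z) (Sum.inl z) < G.dist (Sum.inl z) (Sum.inr f) := by
                have h0 : G.dist (Sum.inl z) (Sum.inl z) = 0 := (hc.dist_eq_zero_iff).mpr rfl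
                have h1 : G.dist (Sum.inl z) (Sum.inr f) = 1 :=
                  dist_eq_one_iff_adj.mpr ((adj_inl_inr hG).mpr hz)
                omega
              rw [hustar, glueFun_eq hPdisj hzE hPzz, Function.update_self]
          have hQg : ∀ v' ∈ (N f).erase v, ∀ g ∈ vSideF G v' f,
              Q g (Function.update ustar v x) =
                Q g (Function.update (e v') v' (w v')) := by
            intro v' hv'E g hg
            have hv'E' := Finset.mem_erase.mp hv'E
            apply hdep
            intro z hz
            have hPz : G.dist (Sum.inl z) (Sum.inl v') < G.dist (Sum.inl z) (Sum.inr f) :=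
              support_vSideF hG hc ha hv'E'.2 hg hz
            have hzv : z ≠ v := by
              intro h; subst h
              exact nbr_not_vSide hG hc ha hvf hv'E'.2 (Ne.symm hv'E'.1) hPz
            rw [Function.update_of_ne hzv, hustar, glueFun_eq hPdisj hv'E hPz]
          have hstep1 : ∀ v' ∈ (N f).erase v,
              (it (K+1)).1 v' f (Function.update w v x v') =
              ∑ g ∈ vSideF G v' f, Q g (Function.update (e v') v' (w v')) := by
            intro v' hv'
            have hne := (Finset.mem_erase.mp hv').1
            rw [Function.update_of_ne hne, hB v' hv' (w v'), he1 v']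
          have hval : Q f (Function.update w v x) +
              ∑ v' ∈ (N f).erase v, (it (K+1)).1 v' f (Function.update w v x v')
              = ∑ g ∈ fSide G f v, Q g (Function.update ustar v x) := by
            rw [hsum (Function.update ustar v x), hQf]
            congr 1
            apply Finset.sum_congr rfl
            intro v' hv'
            rw [hstep1 v' hv']
            apply Finset.sum_congr rfl
            intro g hg
            exact (hQg v' hv' g hg).symm
          rw [hval]
          exact le_ciSup' (fun u : (v' : V) → U v' =>
            ∑ g ∈ fSide G f v, Q g (Function.update u v x)) ustar
        · apply ciSup_le
          intro u
          refine le_trans ?_ (le_ciSup' _ u)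
          rw [hsum (Function.update u v x)]
          apply add_le_add le_rfl
          apply Finset.sum_le_sum
          intro v' hv'
          have hne := (Finset.mem_erase.mp hv').1
          rw [Function.update_of_ne hne, hB v' hv' (u v')]
          refine le_trans (le_of_eq ?_) (le_ciSup' _ (Function.update u v x))
          have h1 : Function.update u v x v' = u v' := Function.update_of_ne hne x u
          rw [← h1, Function.update_eq_self]
      · -- variable-to-factor message
        intro hn x
        rw [hfp1 v f x]
        have hA : ∀ k, v ∈ N k → k ≠ f → ∀ y : U v, (it (K+1)).2 k v y =
            ⨆ u : (v' : V) → U v', ∑ g ∈ fSide G k v, Q g (Function.update u v y) := by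
          intro k hk hkf
          have hsub : fSide G k v ⊆ vSideF G v f := fun g hg =>
            (vSideF_eq_union hG hc ha hvf g).mpr ⟨k, hk, hkf, hg⟩
          have hcard := Finset.card_le_card hsub
          exact (IH (n-1) (by omega) v k hk).1 (by omega)
        have hdisjk : Set.PairwiseDisjoint
            (↑(Finset.univ.filter (fun k : F => v ∈ N k ∧ k ≠ f)))
            (fun k => fSide G k v) := by
          intro a hA' b hb hab
          rw [Finset.mem_coe, Finset.mem_filter] at hA' hb
          refine Finset.disjoint_left.mpr ?_
          intro g hga hgb
          exact fSide_disj hG hc ha hA'.2.1 hb.2.1 hab hga hgb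
        have hsplit : vSideF G v f =
            (Finset.univ.filter (fun k : F => v ∈ N k ∧ k ≠ f)).biUnion
              (fun k => fSide G k v) := by
          ext g
          rw [vSideF_eq_union hG hc ha hvf g, Finset.mem_biUnion]
          constructor
          · rintro ⟨k, h1, h2, h3⟩
            exact ⟨k, Finset.mem_filter.mpr ⟨Finset.mem_univ k, h1, h2⟩, h3⟩
          · rintro ⟨k, hk, h3⟩
            rw [Finset.mem_filter] at hk
            exact ⟨k, hk.2.1, hk.2.2, h3⟩
        have hsum : ∀ u0 : (v' : V) → U v', ∑ g ∈ vSideF G v f, Q g u0 =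
            ∑ k ∈ Finset.univ.filter (fun k : F => v ∈ N k ∧ k ≠ f),
              ∑ g ∈ fSide G k v, Q g u0 := by
          intro u0
          rw [hsplit, Finset.sum_biUnion hdisjk]
        apply le_antisymm
        · have hch : ∀ k : F, ∃ u0 : (v'' : V) → U v'',
              (⨆ u : (v'' : V) → U v'', ∑ g ∈ fSide G k v,
                Q g (Function.update u v x)) =
                ∑ g ∈ fSide G k v, Q g (Function.update u0 v x) :=
            fun k => (exists_ciSup_eq _).imp (fun u0 h => h.1)
          choose e he1 using hch
          have hPdisj : ∀ k ∈ Finset.univ.filter (fun k : F => v ∈ N k ∧ k ≠ f),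
              ∀ k' ∈ Finset.univ.filter (fun k : F => v ∈ N k ∧ k ≠ f), ∀ z : V,
              (G.dist (Sum.inl z) (Sum.inr k) < G.dist (Sum.inl z) (Sum.inl v)) →
              (G.dist (Sum.inl z) (Sum.inr k') < G.dist (Sum.inl z) (Sum.inl v)) → k = k' := by
            intro k hk k' hk' z h1 h2
            rw [Finset.mem_filter] at hk hk'
            by_contra hne
            exact point_disj_around_v hG hc ha hk.2.1 hk'.2.1 hne h1 h2
          set ustar : (v'' : V) → U v'' :=
            glueFun (Finset.univ.filter (fun k : F => v ∈ N k ∧ k ≠ f))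
              (fun k z => G.dist (Sum.inl z) (Sum.inr k) < G.dist (Sum.inl z) (Sum.inl v))
              e (Classical.arbitrary _) with hustar
          have hQg : ∀ k ∈ Finset.univ.filter (fun k : F => v ∈ N k ∧ k ≠ f),
              ∀ g ∈ fSide G k v,
              Q g (Function.update (e k) v x) = Q g (Function.update ustar v x) := by
            intro k hk g hg
            have hk' := Finset.mem_filter.mp hk
            apply hdep
            intro z hz
            rcases support_fSide hG hc ha hk'.2.1 hg hz with rfl | hPz
            · rw [Function.update_self, Function.update_self]
            · have hzv : z ≠ v := by
                intro h; subst h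
                have h0 : G.dist (Sum.inl z) (Sum.inl z) = 0 := (hc.dist_eq_zero_iff).mpr rfl
                omega
              rw [Function.update_of_ne hzv, Function.update_of_ne hzv, hustar,
                glueFun_eq hPdisj hk hPz]
          have hval : ∑ k ∈ Finset.univ.filter (fun k : F => v ∈ N k ∧ k ≠ f),
              (it (K+1)).2 k v x = ∑ g ∈ vSideF G v f, Q g (Function.update ustar v x) := by
            rw [hsum (Function.update ustar v x)]
            apply Finset.sum_congr rfl
            intro k hk
            have hk' := Finset.mem_filter.mp hk
            rw [hA k hk'.2.1 hk'.2.2 x, he1 k]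
            apply Finset.sum_congr rfl
            intro g hg
            exact hQg k hk g hg
          rw [hval]
          exact le_ciSup' (fun u : (v' : V) → U v' =>
            ∑ g ∈ vSideF G v f, Q g (Function.update u v x)) ustar
        · apply ciSup_le
          intro u
          rw [hsum (Function.update u v x)]
          apply Finset.sum_le_sum
          intro k hk
          have hk' := Finset.mem_filter.mp hk
          rw [hA k hk'.2.1 hk'.2.2 x]
          exact le_ciSup' (fun u : (v' : V) → U v' =>
            ∑ g ∈ fSide G k v, Q g (Function.update u v x)) u
  -- the belief at a variable computes the max-marginal
  have hkey : ∀ (v : V) (x : U v),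
      ∑ f ∈ Finset.univ.filter (fun f : F => v ∈ N f), (it (K+1)).2 f v x
        = ⨆ u : (v' : V) → U v', ∑ g : F, Q g (Function.update u v x) := by
    intro v x
    have hA : ∀ f, v ∈ N f → ∀ y : U v, (it (K+1)).2 f v y =
        ⨆ u : (v' : V) → U v', ∑ g ∈ fSide G f v, Q g (Function.update u v y) := by
      intro f hf
      refine (hAB (2 * Fintype.card F) v f hf).1 ?_
      have := Finset.card_le_univ (fSide G f v)
      omega
    have hdisjk : Set.PairwiseDisjoint
        (↑(Finset.univ.filter (fun k : F => v ∈ N k)))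
        (fun k => fSide G k v) := by
      intro a hA' b hb hab
      rw [Finset.mem_coe, Finset.mem_filter] at hA' hb
      refine Finset.disjoint_left.mpr ?_
      intro g hga hgb
      exact fSide_disj hG hc ha hA'.2 hb.2 hab hga hgb
    have hsplit : (Finset.univ : Finset F) =
        (Finset.univ.filter (fun k : F => v ∈ N k)).biUnion (fun k => fSide G k v) := by
      ext g
      simp only [Finset.mem_univ, true_iff, Finset.mem_biUnion]
      obtain ⟨k, hk, hgk⟩ := cover_v hG hc ha v g
      exact ⟨k, Finset.mem_filter.mpr ⟨Finset.mem_univ k, hk⟩, hgk⟩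
    have hsum : ∀ u0 : (v' : V) → U v', ∑ g : F, Q g u0 =
        ∑ k ∈ Finset.univ.filter (fun k : F => v ∈ N k),
          ∑ g ∈ fSide G k v, Q g u0 := by
      intro u0
      rw [← Finset.sum_biUnion hdisjk, ← hsplit]
    apply le_antisymm
    · have hch : ∀ k : F, ∃ u0 : (v'' : V) → U v'',
          (⨆ u : (v'' : V) → U v'', ∑ g ∈ fSide G k v,
            Q g (Function.update u v x)) =
            ∑ g ∈ fSide G k v, Q g (Function.update u0 v x) :=
        fun k => (exists_ciSup_eq _).imp (fun u0 h => h.1)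
      choose e he1 using hch
      have hPdisj : ∀ k ∈ Finset.univ.filter (fun k : F => v ∈ N k),
          ∀ k' ∈ Finset.univ.filter (fun k : F => v ∈ N k), ∀ z : V,
          (G.dist (Sum.inl z) (Sum.inr k) < G.dist (Sum.inl z) (Sum.inl v)) →
          (G.dist (Sum.inl z) (Sum.inr k') < G.dist (Sum.inl z) (Sum.inl v)) → k = k' := by
        intro k hk k' hk' z h1 h2
        rw [Finset.mem_filter] at hk hk'
        by_contra hne
        exact point_disj_around_v hG hc ha hk.2 hk'.2 hne h1 h2
      set ustar : (v'' : V) → U v'' :=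
        glueFun (Finset.univ.filter (fun k : F => v ∈ N k))
          (fun k z => G.dist (Sum.inl z) (Sum.inr k) < G.dist (Sum.inl z) (Sum.inl v))
          e (Classical.arbitrary _) with hustar
      have hQg : ∀ k ∈ Finset.univ.filter (fun k : F => v ∈ N k),
          ∀ g ∈ fSide G k v,
          Q g (Function.update (e k) v x) = Q g (Function.update ustar v x) := by
        intro k hk g hg
        have hk' := Finset.mem_filter.mp hk
        apply hdep
        intro z hz
        rcases support_fSide hG hc ha hk'.2 hg hz with rfl | hPz
        · rw [Function.update_self, Function.update_self]
        · have hzv : z ≠ v := by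
            intro h; subst h
            have h0 : G.dist (Sum.inl z) (Sum.inl z) = 0 := (hc.dist_eq_zero_iff).mpr rfl
            omega
          rw [Function.update_of_ne hzv, Function.update_of_ne hzv, hustar,
            glueFun_eq hPdisj hk hPz]
      have hval : ∑ f ∈ Finset.univ.filter (fun f : F => v ∈ N f),
          (it (K+1)).2 f v x = ∑ g : F, Q g (Function.update ustar v x) := by
        rw [hsum (Function.update ustar v x)]
        apply Finset.sum_congr rfl
        intro k hk
        have hk' := Finset.mem_filter.mp hk
        rw [hA k hk'.2 x, he1 k]
        apply Finset.sum_congr rfl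
        intro g hg
        exact hQg k hk g hg
      rw [hval]
      exact le_ciSup' (fun u : (v' : V) → U v' =>
        ∑ g : F, Q g (Function.update u v x)) ustar
    · apply ciSup_le
      intro u
      rw [hsum (Function.update u v x)]
      apply Finset.sum_le_sum
      intro k hk
      have hk' := Finset.mem_filter.mp hk
      rw [hA k hk'.2 x]
      exact le_ciSup' (fun u : (v' : V) → U v' =>
        ∑ g ∈ fSide G k v, Q g (Function.update u v x)) u
  -- decoding
  obtain ⟨uopt, hopt, huniq⟩ := hunique
  intro usel hsel u
  suffices husel : usel = uopt by rw [husel]; exact hopt u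
  funext v
  have hsupopt : (⨆ u0 : (v' : V) → U v', ∑ g : F, Q g (Function.update u0 v (uopt v)))
      = ∑ f : F, Q f uopt := by
    apply le_antisymm
    · exact ciSup_le (fun u0 => hopt _)
    · refine le_trans (le_of_eq ?_) (le_ciSup' _ uopt)
      rw [Function.update_eq_self]
  have h2 := hsel v (uopt v)
  rw [hkey v (uopt v), hkey v (usel v), hsupopt] at h2
  obtain ⟨u0, hu0⟩ := exists_ciSup_eq
    (fun u1 : (v' : V) → U v' => ∑ g : F, Q g (Function.update u1 v (usel v)))
  rw [hu0.1] at h2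
  have hmax : ∀ u', ∑ f : F, Q f u' ≤ ∑ f : F, Q f (Function.update u0 v (usel v)) :=
    fun u' => le_trans (hopt u') h2
  have hueq := huniq _ hmax
  have := congrFun hueq v
  rw [Function.update_self] at this
  exact this
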